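/- Let n, k, y be integers with 1 ≤ k ≤ n, y even, 2 ≤ y < k, and (log 2)/2 ≤ yk/n < 1 (log denoting natural logarithm). Then the probability that a lazy step selects between 1 and y/2 (inclusive) of the y mismatched coordinates is at least (√2 − 1)/(4·√2); that is, ∑_{i : 1 ≤ i ≤ y/2} binom(y,i)·binom(n−y, k−i) / (2·binom(n,k)) ≥ (√2 − 1)/(4·√2). -/

import Mathlib

/-!
Let `w i = C(y,i)·C(n−y,k−i)`, so that `C(n,k) = ∑ᵢ w i` (Vandermonde). When `yk < n` the ratio
`w (i+1) / w i = (y−i)(k−i) / ((i+1)(n−y−k+i+1))` is at most one for `i ≥ 1`, so `w` decreases on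
`[1, y]`; pairing `i` with `i + y/2` shows that the terms `i ∈ [1, y/2]` carry at least half
of `∑_{i ≥ 1} w i = C(n,k) − C(n−y,k)`.
Comparing falling factorials, `C(n−y,k) / C(n,k) ≤ (1 − y/n)^k ≤ exp(−yk/n) ≤ 1/√2`, hence
`∑_{1 ≤ i ≤ y/2} w i ≥ (1 − 1/√2) C(n,k) / 2`.
-/

open Finset

/-- `pcoup n k y i` is the probability that a lazy step of the coupling is active and selects
exactly `i` of the `y` mismatched coordinates among the `k` coordinates picked:
`binom(y,i)·binom(n−y,k−i) / (2·binom(n,k))`. -/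
noncomputable def pcoup (n k y : ℕ) (i : ℕ) : ℝ :=
  ((y.choose i * (n - y).choose (k - i) : ℕ) : ℝ) / (2 * n.choose k)

def hypergeomCount (n k y i : ℕ) : ℕ := y.choose i * (n - y).choose (k - i)

theorem sum_pcoup_eq (n k y : ℕ) (s : Finset ℕ) :
    ∑ i ∈ s, pcoup n k y i = (∑ i ∈ s, hypergeomCount n k y i : ℕ) / (2 * n.choose k) := by
  simp only [pcoup, hypergeomCount, Nat.cast_sum, sum_div]

theorem choose_eq_sum_hypergeomCount {n y : ℕ} (hyn : y ≤ n) (k : ℕ) :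
    n.choose k = ∑ i ∈ range (k + 1), hypergeomCount n k y i := by
  conv_lhs => rw [← Nat.add_sub_cancel' hyn, Nat.add_choose_eq,
    Nat.sum_antidiagonal_eq_sum_range_succ_mk]
  rfl

theorem hypergeomCount_succ_le {n k y i : ℕ} (hn : y * k < n) (hi : 1 ≤ i) (hik : i < k) :
    hypergeomCount n k y (i + 1) ≤ hypergeomCount n k y i := by
  rcases le_or_gt y i with hyi | hiy
  · simp [hypergeomCount, Nat.choose_eq_zero_of_lt (Nat.lt_succ_of_le hyi)]
  set m := n - y
  have hkm : k ≤ m := by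
    have : y + k ≤ y * k := by nlinarith
    omega
  have hk : k - (i + 1) + 1 = k - i := by omega
  have hratio : (y - i) * (k - i) ≤ (i + 1) * (m - (k - (i + 1))) := by
    have hm : (m : ℤ) = n - y := by omega
    have hki : ((k - (i + 1) : ℕ) : ℤ) = k - i - 1 := by omega
    zify [hiy.le, hik.le, (by omega : k - (i + 1) ≤ m)]
    rw [hm, hki]
    nlinarith
  have hpos : 0 < (i + 1) * (m - (k - (i + 1))) := Nat.mul_pos i.succ_pos (by omega)
  refine Nat.le_of_mul_le_mul_right ?_ hpos
  calc hypergeomCount n k y (i + 1) * ((i + 1) * (m - (k - (i + 1))))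
      = (y.choose (i + 1) * (i + 1)) * (m.choose (k - (i + 1)) * (m - (k - (i + 1)))) := by
        simp only [hypergeomCount]; ring
    _ = (y.choose i * (y - i)) * (m.choose (k - i) * (k - i)) := by
        rw [Nat.choose_succ_right_eq, ← Nat.choose_succ_right_eq m, hk]
    _ = hypergeomCount n k y i * ((y - i) * (k - i)) := by simp only [hypergeomCount]; ring
    _ ≤ hypergeomCount n k y i * ((i + 1) * (m - (k - (i + 1)))) := Nat.mul_le_mul_left _ hratio

theorem hypergeomCount_antitoneOn {n k y : ℕ} (hn : y * k < n) :
    AntitoneOn (hypergeomCount n k y) (Set.Icc 1 k) :=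
  antitoneOn_of_succ_le Set.ordConnected_Icc fun _ _ hi hi' ↦
    hypergeomCount_succ_le hn hi.1 (Nat.succ_le_iff.1 hi'.2)

theorem sum_range_add_self_le_two_nsmul {M : Type*} [AddCommMonoid M] [PartialOrder M]
    [IsOrderedAddMonoid M] {f : ℕ → M} {h : ℕ} (hf : AntitoneOn f (Set.Iio (h + h))) :
    ∑ i ∈ range (h + h), f i ≤ 2 • ∑ i ∈ range h, f i := by
  rw [sum_range_add, two_nsmul]
  gcongr with i hi
  rw [mem_range] at hi
  exact hf (Set.mem_Iio.2 (by omega)) (Set.mem_Iio.2 (by omega)) (by omega)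

theorem choose_le_choose_sub_add_two_mul_sum {n k y h : ℕ} (hn : y * k < n) (hyk : y < k)
    (hy : y = h + h) :
    n.choose k ≤ (n - y).choose k + 2 * ∑ i ∈ Icc 1 h, hypergeomCount n k y i := by
  have hvanish : ∀ i ∈ range k, i ∉ range y → hypergeomCount n k y (i + 1) = 0 := by
    intro i _ hi
    rw [mem_range, not_lt] at hi
    simp [hypergeomCount, Nat.choose_eq_zero_of_lt (Nat.lt_succ_of_le hi)]
  have hanti : AntitoneOn (fun i ↦ hypergeomCount n k y (i + 1)) (Set.Iio (h + h)) :=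
    fun i hi j hj hij ↦ hypergeomCount_antitoneOn hn
      ⟨by omega, by rw [Set.mem_Iio] at hi; omega⟩ ⟨by omega, by rw [Set.mem_Iio] at hj; omega⟩
      (by omega)
  have hpair : ∑ i ∈ range y, hypergeomCount n k y (i + 1)
      ≤ 2 * ∑ i ∈ range h, hypergeomCount n k y (i + 1) := by
    simpa only [← hy, smul_eq_mul] using sum_range_add_self_le_two_nsmul hanti
  calc n.choose k = ∑ i ∈ range (k + 1), hypergeomCount n k y i :=
        choose_eq_sum_hypergeomCount (by nlinarith) k
    _ = ∑ i ∈ range y, hypergeomCount n k y (i + 1) + (n - y).choose k := by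
        rw [sum_range_succ', sum_subset (range_subset_range.2 hyk.le) hvanish]
        simp [hypergeomCount]
    _ ≤ 2 * ∑ i ∈ range h, hypergeomCount n k y (i + 1) + (n - y).choose k :=
        Nat.add_le_add_right hpair _
    _ = (n - y).choose k + 2 * ∑ i ∈ Icc 1 h, hypergeomCount n k y i := by
        rw [add_comm, range_eq_Ico, sum_Ico_add', ← Ico_add_one_right_eq_Icc, zero_add]

theorem Nat.descFactorial_mul_pow_le {m n : ℕ} (hmn : m ≤ n) (j : ℕ) :
    m.descFactorial j * n ^ j ≤ n.descFactorial j * m ^ j := by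
  induction j with
  | zero => simp
  | succ j ih =>
    have hstep : (m - j) * n ≤ (n - j) * m := by
      rcases le_or_gt j m with hjm | hmj
      · zify [hjm, hjm.trans hmn]
        nlinarith
      · simp [Nat.sub_eq_zero_of_le hmj.le]
    calc m.descFactorial (j + 1) * n ^ (j + 1)
        = ((m - j) * n) * (m.descFactorial j * n ^ j) := by
          rw [Nat.descFactorial_succ, pow_succ]; ring
      _ ≤ ((n - j) * m) * (n.descFactorial j * m ^ j) := Nat.mul_le_mul hstep ih
      _ = n.descFactorial (j + 1) * m ^ (j + 1) := by
          rw [Nat.descFactorial_succ, pow_succ]; ring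

theorem Nat.choose_mul_pow_le {m n : ℕ} (hmn : m ≤ n) (k : ℕ) :
    m.choose k * n ^ k ≤ n.choose k * m ^ k := by
  refine Nat.le_of_mul_le_mul_left ?_ k.factorial_pos
  simpa only [Nat.descFactorial_eq_factorial_mul_choose, mul_assoc] using
    Nat.descFactorial_mul_pow_le hmn k

theorem choose_sub_le_exp_mul_choose {n y : ℕ} (hn : 0 < n) (hyn : y ≤ n) (k : ℕ) :
    ((n - y).choose k : ℝ) ≤ Real.exp (-(y * k / n)) * n.choose k := by
  have hn' : (0 : ℝ) < n := by exact_mod_cast hn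
  have hbase : ((n - y : ℕ) : ℝ) ≤ Real.exp (-(y / n)) * n := by
    calc ((n - y : ℕ) : ℝ) = (1 - y / n) * n := by
          rw [Nat.cast_sub hyn]; field_simp
      _ ≤ Real.exp (-(y / n)) * n := by gcongr; exact Real.one_sub_le_exp_neg _
  have hchoose : ((n - y).choose k : ℝ) * n ^ k ≤ n.choose k * ((n - y : ℕ) : ℝ) ^ k := by
    exact_mod_cast Nat.choose_mul_pow_le (Nat.sub_le n y) k
  refine le_of_mul_le_mul_right ?_ (pow_pos hn' k)
  calc ((n - y).choose k : ℝ) * n ^ k ≤ n.choose k * ((n - y : ℕ) : ℝ) ^ k := hchoose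
    _ ≤ n.choose k * (Real.exp (-(y / n)) * n) ^ k := by gcongr
    _ = Real.exp (-(y * k / n)) * n.choose k * n ^ k := by
        rw [mul_pow, ← Real.exp_nat_mul]; ring_nf

theorem stmt_12_general (n k y : ℕ) (hkn : k ≤ n) (hye : Even y)
    (hyk : y < k) (h1 : Real.log 2 / 2 ≤ (y : ℝ) * k / n) (h2 : (y : ℝ) * k / n < 1) :
    (Real.sqrt 2 - 1) / (4 * Real.sqrt 2) ≤ ∑ i ∈ Finset.Icc 1 (y / 2), pcoup n k y i := by
  obtain ⟨h, hy⟩ := hye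
  have hn : 0 < n := by omega
  have hykn : y * k < n := by
    exact_mod_cast (div_lt_one (by positivity : (0 : ℝ) < n)).1 h2
  set S := ∑ i ∈ Icc 1 h, hypergeomCount n k y i
  have hC : (0 : ℝ) < n.choose k := by exact_mod_cast Nat.choose_pos hkn
  have hcomb : (n.choose k : ℝ) ≤ (n - y).choose k + 2 * S := by
    exact_mod_cast choose_le_choose_sub_add_two_mul_sum hykn hyk hy
  have hexp : Real.exp (-(y * k / n)) ≤ (Real.sqrt 2)⁻¹ := calc
    _ ≤ Real.exp (-(Real.log 2 / 2)) := Real.exp_le_exp.2 (by linarith)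
    _ = (Real.sqrt 2)⁻¹ := by
        rw [Real.exp_neg, ← Real.log_sqrt zero_le_two, Real.exp_log (by positivity)]
  have hsub : ((n - y).choose k : ℝ) ≤ (Real.sqrt 2)⁻¹ * n.choose k :=
    (choose_sub_le_exp_mul_choose hn (by omega) k).trans (by gcongr)
  rw [sum_pcoup_eq, show y / 2 = h by omega]
  calc (Real.sqrt 2 - 1) / (4 * Real.sqrt 2)
      = (1 - (Real.sqrt 2)⁻¹) * n.choose k / (4 * n.choose k) := by field_simp
    _ ≤ 2 * S / (4 * n.choose k) := div_le_div_of_nonneg_right (by linarith) (by positivity)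
    _ = S / (2 * n.choose k) := by field_simp; ring

/-- Lemma `lemma general`, part 8: if `y < k` and `(log 2)/2 ≤ yk/n < 1`, the probability of
selecting between `1` and `y/2` mismatched coordinates is at least `(√2−1)/(4√2)`. -/
theorem stmt_12 (n k y : ℕ) (hk1 : 1 ≤ k) (hkn : k ≤ n) (hye : Even y) (hy2 : 2 ≤ y)
    (hyk : y < k) (h1 : Real.log 2 / 2 ≤ (y : ℝ) * k / n) (h2 : (y : ℝ) * k / n < 1) :
    (Real.sqrt 2 - 1) / (4 * Real.sqrt 2) ≤ ∑ i ∈ Finset.Icc 1 (y / 2), pcoup n k y i :=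
  stmt_12_general n k y hkn hye hyk h1 h2
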